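/- For an irreducible aperiodic stochastic matrix P on a finite state space, the distribution of the chain converges to the stationary distribution: for every initial distribution ν, νPⁿ → μ as n → ∞, where μ is the unique stationary distribution. -/
import Mathlib


open Matrix BigOperators Filter

def IsStochastic {n : ℕ} (P : Matrix (Fin n) (Fin n) ℝ) : Prop :=
  (∀ i j, 0 ≤ P i j) ∧ ∀ i, ∑ j, P i j = 1

def IsIrreducibleMat {n : ℕ} (P : Matrix (Fin n) (Fin n) ℝ) : Prop :=
  ∀ i j, ∃ k : ℕ, 1 ≤ k ∧ 0 < (P ^ k) i j

def IsAperiodicMat {n : ℕ} (P : Matrix (Fin n) (Fin n) ℝ) : Prop :=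
  ∀ i, ∀ d : ℕ, (∀ k : ℕ, 1 ≤ k → 0 < (P ^ k) i i → d ∣ k) → d ∣ 1

def IsStationaryDist {n : ℕ} (P : Matrix (Fin n) (Fin n) ℝ) (μ : Fin n → ℝ) : Prop :=
  (∀ i, 0 ≤ μ i) ∧ (∑ i, μ i = 1) ∧ ∀ j, ∑ i, μ i * P i j = μ j

/- ### Auxiliary lemmas -/

section MCaux

variable {n : ℕ} {P : Matrix (Fin n) (Fin n) ℝ}

lemma MC_stoch_pow (hP : IsStochastic P) : ∀ k : ℕ, IsStochastic (P ^ k) := by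
  intro k
  induction k with
  | zero =>
    constructor
    · intro i j
      simp [pow_zero, Matrix.one_apply]
      split <;> norm_num
    · intro i
      simp [pow_zero, Matrix.one_apply]
  | succ k ih =>
    rw [pow_succ]
    constructor
    · intro i j
      rw [Matrix.mul_apply]
      exact Finset.sum_nonneg fun l _ => mul_nonneg (ih.1 i l) (hP.1 l j)
    · intro i
      simp only [Matrix.mul_apply]
      rw [Finset.sum_comm]
      calc ∑ l, ∑ j, (P ^ k) i l * P l j = ∑ l, (P ^ k) i l * ∑ j, P l j := by
            simp [Finset.mul_sum]
        _ = 1 := by simp [hP.2, ih.2 i]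

lemma MC_pow_entry_mul_le (hP : IsStochastic P) (a b : ℕ) (i j l : Fin n) :
    (P ^ a) i j * (P ^ b) j l ≤ (P ^ (a + b)) i l := by
  rw [pow_add, Matrix.mul_apply]
  exact Finset.single_le_sum
    (f := fun m => (P ^ a) i m * (P ^ b) m l)
    (fun m _ => mul_nonneg ((MC_stoch_pow hP a).1 i m) ((MC_stoch_pow hP b).1 m l))
    (Finset.mem_univ j)

/-- A set of naturals closed under addition whose gcd is `1` contains all
sufficiently large naturals. -/
lemma MC_semigroup_cofinite (S : Set ℕ)
    (hadd : ∀ a ∈ S, ∀ b ∈ S, a + b ∈ S)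
    (hne : S.Nonempty)
    (hgcd : ∀ d : ℕ, (∀ k ∈ S, d ∣ k) → d ∣ 1) :
    ∃ M, ∀ k, M ≤ k → k ∈ S := by
  -- positive multiples stay in S
  have hmul : ∀ s ∈ S, ∀ m : ℕ, 1 ≤ m → m * s ∈ S := by
    intro s hs m hm
    induction m with
    | zero => omega
    | succ m ih =>
      rcases Nat.eq_zero_or_pos m with rfl | hm'
      · simpa using hs
      · have := hadd _ (ih hm') _ hs
        convert this using 1
        ring
  -- the subgroup of ℤ generated by S
  set T : Set ℤ := ((↑) '' S) with hT
  obtain ⟨g, hg⟩ := Int.subgroup_cyclic (AddSubgroup.closure T)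
  have hdvd : ∀ s ∈ S, g.natAbs ∣ s := by
    intro s hs
    have hsT : (s : ℤ) ∈ AddSubgroup.closure T :=
      AddSubgroup.subset_closure ⟨s, hs, rfl⟩
    rw [hg, AddSubgroup.mem_closure_singleton] at hsT
    obtain ⟨m, hm⟩ := hsT
    have hdz : g ∣ (s : ℤ) := ⟨m, by rw [← hm, smul_eq_mul]; ring⟩
    have := Int.natAbs_dvd_natAbs.mpr hdz
    simpa using this
  have hg1 : g.natAbs = 1 := Nat.dvd_one.mp (hgcd _ hdvd)
  -- 1 ∈ closure T
  have h1T : (1 : ℤ) ∈ AddSubgroup.closure T := by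
    rw [hg, AddSubgroup.mem_closure_singleton]
    refine ⟨g, ?_⟩
    rw [smul_eq_mul]
    rcases Int.natAbs_eq_iff.mp hg1 with h | h <;> rw [h] <;> norm_num
  -- every element of the closure is a difference of elements of `S ∪ {0}`
  have hdec : ∀ x ∈ AddSubgroup.closure T,
      ∃ a b : ℕ, (a ∈ S ∨ a = 0) ∧ (b ∈ S ∨ b = 0) ∧ x = (a : ℤ) - b := by
    intro x hx
    refine AddSubgroup.closure_induction ?_ ?_ ?_ ?_ hx
    · rintro _ ⟨s, hs, rfl⟩
      exact ⟨s, 0, Or.inl hs, Or.inr rfl, by push_cast; ring⟩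
    · exact ⟨0, 0, Or.inr rfl, Or.inr rfl, by norm_num⟩
    · rintro x y _ _ ⟨a, b, ha, hb, rfl⟩ ⟨c, d, hc, hd, rfl⟩
      have hsum : ∀ p q : ℕ, (p ∈ S ∨ p = 0) → (q ∈ S ∨ q = 0) → (p + q ∈ S ∨ p + q = 0) := by
        rintro p q (hp | rfl) (hq | rfl)
        · exact Or.inl (hadd _ hp _ hq)
        · simpa using Or.inl hp
        · simpa using Or.inl hq
        · simp
      exact ⟨a + c, b + d, hsum _ _ ha hc, hsum _ _ hb hd, by push_cast; ring⟩
    · rintro x _ ⟨a, b, ha, hb, rfl⟩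
      exact ⟨b, a, hb, ha, by push_cast; ring⟩
  obtain ⟨a, b, ha, hb, hab⟩ := hdec 1 h1T
  have hab' : a = b + 1 := by omega
  have haS : a ∈ S := by
    rcases ha with h | h
    · exact h
    · omega
  rcases Nat.eq_zero_or_pos b with rfl | hbpos
  · -- a = 1 ∈ S
    refine ⟨1, fun k hk => ?_⟩
    have := hmul _ haS k hk
    simpa [hab'] using this
  · have hbS : b ∈ S := by
      rcases hb with h | h
      · exact h
      · omega
    refine ⟨b * b, fun k hk => ?_⟩
    set q := k / b with hq
    set r := k % b with hr
    have hdm : b * q + r = k := Nat.div_add_mod k b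
    have hrb : r < b := Nat.mod_lt _ hbpos
    have hbq : b ≤ q := (Nat.le_div_iff_mul_le hbpos).2 (by nlinarith)
    set t := q - r with ht
    have hqt : q = r + t := by omega
    have htpos : 1 ≤ t := by omega
    have hk' : k = t * b + r * a := by
      rw [hab']
      have : k = b * (r + t) + r := by rw [← hqt]; exact hdm.symm
      rw [this]; ring
    rcases Nat.eq_zero_or_pos r with hr0 | hrpos
    · have hk2 : k = t * b := by simpa [hr0] using hk'
      rw [hk2]; exact hmul _ hbS _ htpos
    · rw [hk']
      exact hadd _ (hmul _ hbS _ htpos) _ (hmul _ haS _ hrpos)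

/-- An irreducible aperiodic stochastic matrix has a power with all entries positive. -/
lemma MC_exists_primitive (hn : 0 < n) (hP : IsStochastic P)
    (hirr : IsIrreducibleMat P) (haper : IsAperiodicMat P) :
    ∃ N : ℕ, 1 ≤ N ∧ ∀ i j, 0 < (P ^ N) i j := by
  haveI : Nonempty (Fin n) := ⟨⟨0, hn⟩⟩
  have hret : ∀ i : Fin n, ∃ M, ∀ k, M ≤ k → k ∈ {k : ℕ | 1 ≤ k ∧ 0 < (P ^ k) i i} := by
    intro i
    apply MC_semigroup_cofinite
    · rintro a ⟨ha1, ha2⟩ b ⟨hb1, hb2⟩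
      refine ⟨by omega, ?_⟩
      have := MC_pow_entry_mul_le hP a b i i i
      have hpos : 0 < (P ^ a) i i * (P ^ b) i i := mul_pos ha2 hb2
      linarith
    · obtain ⟨k, hk1, hk2⟩ := hirr i i
      exact ⟨k, hk1, hk2⟩
    · intro d hd
      exact haper i d fun k hk1 hk2 => hd k ⟨hk1, hk2⟩
  choose M hM using hret
  choose K hK1 hKpos using hirr
  set Mm := Finset.univ.sup M with hMm
  set Km := Finset.univ.sup (fun i => Finset.univ.sup (K i)) with hKm
  refine ⟨Mm + Km + 1, by omega, fun i j => ?_⟩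
  have hKle : K i j ≤ Km := le_trans (Finset.le_sup (Finset.mem_univ j))
    (Finset.le_sup (f := fun i => Finset.univ.sup (K i)) (Finset.mem_univ i))
  have hMle : M i ≤ Mm := Finset.le_sup (Finset.mem_univ i)
  have h1 : 0 < (P ^ (Mm + 1 + (Km - K i j))) i i :=
    (hM i _ (by omega)).2
  have h2 : 0 < (P ^ (K i j)) i j := hKpos i j
  have h3 := MC_pow_entry_mul_le hP (Mm + 1 + (Km - K i j)) (K i j) i i j
  have heq : Mm + 1 + (Km - K i j) + K i j = Mm + Km + 1 := by omega
  rw [heq] at h3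
  have := mul_pos h1 h2
  linarith

/-- Non-expansion of the ℓ¹ norm under a stochastic matrix. -/
lemma MC_nonexpand (Q : Matrix (Fin n) (Fin n) ℝ) (hQ : IsStochastic Q) (x : Fin n → ℝ) :
    ∑ j, |∑ i, x i * Q i j| ≤ ∑ i, |x i| := by
  calc ∑ j, |∑ i, x i * Q i j| ≤ ∑ j, ∑ i, |x i| * Q i j := by
        refine Finset.sum_le_sum fun j _ => ?_
        refine le_trans (Finset.abs_sum_le_sum_abs _ _) (Finset.sum_le_sum fun i _ => ?_)
        rw [abs_mul, abs_of_nonneg (hQ.1 i j)]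
    _ = ∑ i, |x i| * ∑ j, Q i j := by rw [Finset.sum_comm]; simp [Finset.mul_sum]
    _ = ∑ i, |x i| := by simp [hQ.2]

/-- Doeblin contraction: a stochastic matrix with entries ≥ δ contracts
mean-zero vectors in ℓ¹ by a factor `1 - n δ`. -/
lemma MC_contract (Q : Matrix (Fin n) (Fin n) ℝ) (hQ : IsStochastic Q) (δ : ℝ)
    (hδ : ∀ i j, δ ≤ Q i j) (x : Fin n → ℝ) (hx : ∑ i, x i = 0) :
    ∑ j, |∑ i, x i * Q i j| ≤ (1 - n * δ) * ∑ i, |x i| := by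
  have key : ∀ j, |∑ i, x i * Q i j| ≤ ∑ i, |x i| * (Q i j - δ) := by
    intro j
    have hrw : ∑ i, x i * Q i j = ∑ i, x i * (Q i j - δ) := by
      simp only [mul_sub, Finset.sum_sub_distrib, ← Finset.sum_mul, hx, zero_mul, sub_zero]
    rw [hrw]
    refine le_trans (Finset.abs_sum_le_sum_abs _ _) (Finset.sum_le_sum fun i _ => ?_)
    rw [abs_mul, abs_of_nonneg (sub_nonneg.mpr (hδ i j))]
  calc ∑ j, |∑ i, x i * Q i j| ≤ ∑ j, ∑ i, |x i| * (Q i j - δ) :=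
        Finset.sum_le_sum fun j _ => key j
    _ = ∑ i, |x i| * (1 - n * δ) := by
        rw [Finset.sum_comm]
        refine Finset.sum_congr rfl fun i _ => ?_
        rw [← Finset.mul_sum, Finset.sum_sub_distrib, hQ.2 i, Finset.sum_const,
          Finset.card_univ, Fintype.card_fin, nsmul_eq_mul]
    _ = (1 - n * δ) * ∑ i, |x i| := by rw [← Finset.sum_mul, mul_comm]

/-- `ν P^(k+m) = (ν P^k) P^m`, entrywise. -/
lemma MC_step (k m : ℕ) (ν : Fin n → ℝ) (j : Fin n) :
    ∑ i, ν i * (P ^ (k + m)) i j = ∑ l, (∑ i, ν i * (P ^ k) i l) * (P ^ m) l j := by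
  rw [pow_add]
  simp only [Matrix.mul_apply, Finset.mul_sum, Finset.sum_mul]
  rw [Finset.sum_comm]
  exact Finset.sum_congr rfl fun l _ => Finset.sum_congr rfl fun i _ => by ring

lemma MC_dist_pres (hP : IsStochastic P) (k : ℕ) (ν : Fin n → ℝ)
    (h0 : ∀ i, 0 ≤ ν i) (h1 : ∑ i, ν i = 1) :
    (∀ j, 0 ≤ ∑ i, ν i * (P ^ k) i j) ∧ ∑ j, ∑ i, ν i * (P ^ k) i j = 1 := by
  constructor
  · intro j
    exact Finset.sum_nonneg fun i _ => mul_nonneg (h0 i) ((MC_stoch_pow hP k).1 i j)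
  · rw [Finset.sum_comm]
    calc ∑ i, ∑ j, ν i * (P ^ k) i j = ∑ i, ν i * ∑ j, (P ^ k) i j := by
          simp [Finset.mul_sum]
      _ = 1 := by simp [(MC_stoch_pow hP k).2, h1]

lemma MC_sum_zero_pres (hP : IsStochastic P) (k : ℕ) (x : Fin n → ℝ)
    (hx : ∑ i, x i = 0) : ∑ j, ∑ i, x i * (P ^ k) i j = 0 := by
  rw [Finset.sum_comm]
  calc ∑ i, ∑ j, x i * (P ^ k) i j = ∑ i, x i * ∑ j, (P ^ k) i j := by
        simp [Finset.mul_sum]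
    _ = 0 := by simp [(MC_stoch_pow hP k).2, hx]

lemma MC_nonexpand_pow (hP : IsStochastic P) (k : ℕ) (x : Fin n → ℝ) :
    ∑ j, |∑ i, x i * (P ^ k) i j| ≤ ∑ i, |x i| := by
  induction k with
  | zero => simp [Matrix.one_apply]
  | succ k ih =>
    have hrw : ∀ j, ∑ i, x i * (P ^ (k + 1)) i j
        = ∑ l, (∑ i, x i * (P ^ k) i l) * P l j := by
      intro j
      have := MC_step (P := P) k 1 x j
      simpa [pow_one] using this
    simp only [hrw]
    exact le_trans (MC_nonexpand P hP _) ih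

end MCaux

/-- For an irreducible aperiodic stochastic matrix there is a unique stationary
distribution `μ`, and for every initial distribution `ν` the distribution `ν Pᵏ`
converges entrywise to `μ`. -/
theorem markov_convergence_to_stationary {n : ℕ} (hn : 0 < n)
    (P : Matrix (Fin n) (Fin n) ℝ)
    (hP : IsStochastic P) (hirr : IsIrreducibleMat P) (haper : IsAperiodicMat P) :
    ∃ μ : Fin n → ℝ, IsStationaryDist P μ ∧
      (∀ ν : Fin n → ℝ, IsStationaryDist P ν → ν = μ) ∧
      ∀ ν : Fin n → ℝ, (∀ i, 0 ≤ ν i) → (∑ i, ν i = 1) →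
        ∀ j, Tendsto (fun k : ℕ => ∑ i, ν i * (P ^ k) i j) atTop (nhds (μ j)) := by
  haveI : Nonempty (Fin n) := ⟨⟨0, hn⟩⟩
  obtain ⟨N, hN1, hNpos⟩ := MC_exists_primitive hn hP hirr haper
  set Q := P ^ N with hQdef
  have hQ : IsStochastic Q := MC_stoch_pow hP N
  set δ := Finset.univ.inf' Finset.univ_nonempty
      (fun i => Finset.univ.inf' Finset.univ_nonempty fun j => Q i j) with hδdef
  have hδle : ∀ i j, δ ≤ Q i j := fun i j =>
    le_trans (Finset.inf'_le _ (Finset.mem_univ i)) (Finset.inf'_le _ (Finset.mem_univ j))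
  have hδpos : 0 < δ := by
    rw [hδdef, Finset.lt_inf'_iff]
    intro i _
    rw [Finset.lt_inf'_iff]
    intro j _
    exact hNpos i j
  have hnδ : (n : ℝ) * δ ≤ 1 := by
    obtain ⟨i0⟩ := (inferInstance : Nonempty (Fin n))
    have h := hQ.2 i0
    have h2 : ∑ _j : Fin n, δ ≤ ∑ j, Q i0 j := Finset.sum_le_sum fun j _ => hδle i0 j
    rw [h] at h2
    simpa [Finset.sum_const, Finset.card_univ, nsmul_eq_mul] using h2
  set r := 1 - (n : ℝ) * δ with hrdef
  have hr0 : 0 ≤ r := by linarith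
  have hr1 : r < 1 := by
    have : 0 < (n : ℝ) * δ := mul_pos (by exact_mod_cast hn) hδpos
    linarith
  -- geometric decay along multiples of N
  have hdecay : ∀ x : Fin n → ℝ, (∑ i, x i = 0) → ∀ m : ℕ,
      ∑ j, |∑ i, x i * (P ^ (m * N)) i j| ≤ r ^ m * ∑ i, |x i| := by
    intro x hx m
    induction m with
    | zero => simp [Matrix.one_apply]
    | succ m ih =>
      have hrw : ∀ j, ∑ i, x i * (P ^ ((m + 1) * N)) i j
          = ∑ l, (∑ i, x i * (P ^ (m * N)) i l) * Q l j := by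
        intro j
        have := MC_step (P := P) (m * N) N x j
        rw [← Nat.succ_mul] at this
        exact this
      simp only [hrw]
      have hy : ∑ l, (∑ i, x i * (P ^ (m * N)) i l) = 0 := MC_sum_zero_pres hP _ x hx
      calc ∑ j, |∑ l, (∑ i, x i * (P ^ (m * N)) i l) * Q l j|
          ≤ (1 - n * δ) * ∑ l, |∑ i, x i * (P ^ (m * N)) i l| :=
            MC_contract Q hQ δ hδle _ hy
        _ ≤ r * (r ^ m * ∑ i, |x i|) := by
            rw [← hrdef]
            exact mul_le_mul_of_nonneg_left ih hr0
        _ = r ^ (m + 1) * ∑ i, |x i| := by ring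
  -- decay for arbitrary exponents
  have hdecayAll : ∀ x : Fin n → ℝ, (∑ i, x i = 0) → ∀ k : ℕ,
      ∑ j, |∑ i, x i * (P ^ k) i j| ≤ r ^ (k / N) * ∑ i, |x i| := by
    intro x hx k
    have hkeq : k / N * N + k % N = k := by rw [mul_comm]; exact Nat.div_add_mod k N
    calc ∑ j, |∑ i, x i * (P ^ k) i j|
        = ∑ j, |∑ l, (∑ i, x i * (P ^ (k / N * N)) i l) * (P ^ (k % N)) l j| := by
          refine Finset.sum_congr rfl fun j _ => ?_
          have := MC_step (P := P) (k / N * N) (k % N) x j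
          rw [hkeq] at this
          rw [this]
      _ ≤ ∑ l, |∑ i, x i * (P ^ (k / N * N)) i l| :=
          MC_nonexpand_pow hP (k % N) _
      _ ≤ r ^ (k / N) * ∑ i, |x i| := hdecay x hx (k / N)
  -- the base sequence started from the uniform distribution
  set ν₀ : Fin n → ℝ := fun _ => (n : ℝ)⁻¹ with hν₀def
  have hν₀0 : ∀ i, 0 ≤ ν₀ i := fun _ => by positivity
  have hν₀1 : ∑ i, ν₀ i = 1 := by
    have hn' : (n : ℝ) ≠ 0 := by positivity
    simp only [hν₀def, Finset.sum_const, Finset.card_univ, Fintype.card_fin, nsmul_eq_mul]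
    exact mul_inv_cancel₀ hn'
  set u : ℕ → Fin n → ℝ := fun k j => ∑ i, ν₀ i * (P ^ k) i j with hudef
  have hu : ∀ k, (∀ j, 0 ≤ u k j) ∧ ∑ j, u k j = 1 :=
    fun k => MC_dist_pres hP k ν₀ hν₀0 hν₀1
  -- the general difference bound
  have hdiffbound : ∀ (ν : Fin n → ℝ), (∀ i, 0 ≤ ν i) → (∑ i, ν i = 1) →
      ∀ k j, |∑ i, ν i * (P ^ k) i j - u k j| ≤ 2 * r ^ (k / N) := by
    intro ν hν0 hν1 k j
    set z : Fin n → ℝ := fun i => ν i - ν₀ i with hzdef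
    have hz : ∑ i, z i = 0 := by
      simp only [hzdef, Finset.sum_sub_distrib, hν1, hν₀1, sub_self]
    have hz2 : ∑ i, |z i| ≤ 2 := by
      calc ∑ i, |z i| ≤ ∑ i, (ν i + ν₀ i) := by
            refine Finset.sum_le_sum fun i _ => ?_
            have := abs_sub (ν i) (ν₀ i)
            rwa [abs_of_nonneg (hν0 i), abs_of_nonneg (hν₀0 i)] at this
        _ = 2 := by rw [Finset.sum_add_distrib, hν1, hν₀1]; norm_num
    have hrep : ∑ i, ν i * (P ^ k) i j - u k j = ∑ i, z i * (P ^ k) i j := by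
      simp only [hzdef, sub_mul, Finset.sum_sub_distrib, hudef]
    rw [hrep]
    calc |∑ i, z i * (P ^ k) i j| ≤ ∑ j', |∑ i, z i * (P ^ k) i j'| :=
          Finset.single_le_sum (f := fun j' => |∑ i, z i * (P ^ k) i j'|)
            (fun j' _ => abs_nonneg _) (Finset.mem_univ j)
      _ ≤ r ^ (k / N) * ∑ i, |z i| := hdecayAll z hz k
      _ ≤ r ^ (k / N) * 2 := mul_le_mul_of_nonneg_left hz2 (pow_nonneg hr0 _)
      _ = 2 * r ^ (k / N) := by ring
  -- the tail bound tends to zero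
  have hdivt : Tendsto (fun k : ℕ => k / N) atTop atTop :=
    tendsto_atTop_atTop.2 fun M => ⟨M * N, fun k hk => (Nat.le_div_iff_mul_le hN1).2 hk⟩
  have hrpow : Tendsto (fun k : ℕ => r ^ (k / N)) atTop (nhds 0) :=
    (tendsto_pow_atTop_nhds_zero_of_lt_one hr0 hr1).comp hdivt
  have hbt : Tendsto (fun K : ℕ => 2 * r ^ (K / N)) atTop (nhds 0) := by
    simpa using hrpow.const_mul (2 : ℝ)
  -- the sequence u is Cauchy
  have hb2 : ∀ K k m, K ≤ k → k ≤ m → ∀ j, |u m j - u k j| ≤ 2 * r ^ (K / N) := by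
    intro K k m hK hkm j
    have hmk : m - k + k = m := Nat.sub_add_cancel hkm
    have hum : u m j = ∑ i, u (m - k) i * (P ^ k) i j := by
      have := MC_step (P := P) (m - k) k ν₀ j
      rw [Nat.sub_add_cancel hkm] at this
      simp only [hudef]
      exact this
    have h1 := hdiffbound (u (m - k)) (hu (m - k)).1 (hu (m - k)).2 k j
    rw [← hum] at h1
    calc |u m j - u k j| ≤ 2 * r ^ (k / N) := h1
      _ ≤ 2 * r ^ (K / N) := by
          have := pow_le_pow_of_le_one hr0 hr1.le (Nat.div_le_div_right (c := N) hK)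
          linarith
  have hcauchy : CauchySeq u := by
    apply cauchySeq_of_le_tendsto_0 (fun K => 2 * r ^ (K / N)) _ hbt
    intro a c K hKa hKc
    have hb : 0 ≤ 2 * r ^ (K / N) := by positivity
    rw [dist_pi_le_iff hb]
    intro j
    rw [Real.dist_eq]
    rcases le_total a c with h | h
    · rw [abs_sub_comm]
      exact hb2 K a c hKa h j
    · exact hb2 K c a hKc h j
  obtain ⟨μ, hμt⟩ := cauchySeq_tendsto_of_complete hcauchy
  have hμj : ∀ j, Tendsto (fun k => u k j) atTop (nhds (μ j)) :=
    fun j => (tendsto_pi_nhds.mp hμt) j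
  -- general convergence statement
  have hconv : ∀ ν : Fin n → ℝ, (∀ i, 0 ≤ ν i) → (∑ i, ν i = 1) →
      ∀ j, Tendsto (fun k : ℕ => ∑ i, ν i * (P ^ k) i j) atTop (nhds (μ j)) := by
    intro ν hν0 hν1 j
    have hzero : Tendsto (fun k => ∑ i, ν i * (P ^ k) i j - u k j) atTop (nhds 0) := by
      apply squeeze_zero_norm _ hbt
      intro k
      rw [Real.norm_eq_abs]
      exact hdiffbound ν hν0 hν1 k j
    have : (fun k : ℕ => ∑ i, ν i * (P ^ k) i j)
        = fun k => (∑ i, ν i * (P ^ k) i j - u k j) + u k j := by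
      funext k; ring
    rw [this]
    simpa using hzero.add (hμj j)
  refine ⟨μ, ⟨?_, ?_, ?_⟩, ?_, hconv⟩
  · exact fun i => ge_of_tendsto' (hμj i) fun k => (hu k).1 i
  · have h1 : Tendsto (fun k => ∑ j, u k j) atTop (nhds (∑ j, μ j)) :=
      tendsto_finset_sum _ fun j _ => hμj j
    have h2 : (fun k => ∑ j, u k j) = fun _ => (1 : ℝ) := funext fun k => (hu k).2
    rw [h2] at h1
    exact tendsto_nhds_unique h1 tendsto_const_nhds
  · intro j
    have ha : Tendsto (fun k => u (k + 1) j) atTop (nhds (μ j)) :=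
      (hμj j).comp (tendsto_add_atTop_nat 1)
    have hb : (fun k => u (k + 1) j) = fun k => ∑ i, u k i * P i j := by
      funext k
      have := MC_step (P := P) k 1 ν₀ j
      simpa [hudef, pow_one] using this
    rw [hb] at ha
    have hc : Tendsto (fun k => ∑ i, u k i * P i j) atTop (nhds (∑ i, μ i * P i j)) :=
      tendsto_finset_sum _ fun i _ => (hμj i).mul_const _
    exact tendsto_nhds_unique hc ha
  · intro ν hν
    funext j
    have hconst : ∀ k j, ∑ i, ν i * (P ^ k) i j = ν j := by
      intro k
      induction k with
      | zero => intro j; simp [Matrix.one_apply]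
      | succ k ih =>
        intro j
        have hstep := MC_step (P := P) k 1 ν j
        simp only [ih, pow_one] at hstep
        rw [hstep, hν.2.2 j]
    have h1 : Tendsto (fun k : ℕ => ∑ i, ν i * (P ^ k) i j) atTop (nhds (ν j)) := by
      simp only [hconst]
      exact tendsto_const_nhds
    exact tendsto_nhds_unique h1 (hconv ν hν.1 hν.2.1 j)
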